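/- arXiv:2211.09468 — 4 statements merged into one kernel-verified Lean document; each statement's English description precedes it below -/
import Mathlib

section
/- Let F be a field with at least three elements and n ≥ 2. A matrix A ∈ GLₙ(F) is a product of unipotent matrices if and only if det A = 1, i.e., A ∈ SLₙ(F). -/
/-!
A unipotent matrix `1 - N` has determinant `1`: `det (1 - t N)` is a unit of `F[t]`, hence
constant, and it is `1` at `t = 0`. Conversely, `SLₙ(F)` is generated by transvections together
with the diagonal matrices `diag(a, a⁻¹)` in two coordinates, each of the latter is a product of
six transvections, and transvections are unipotent.
-/

open Polynomial

namespace Matrix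

variable {ι R : Type*} [Fintype ι] [DecidableEq ι] [CommRing R]

lemma eval_one_charpolyRev (M : Matrix ι ι R) : eval 1 M.charpolyRev = det (1 - M) := by
  rw [charpolyRev, ← coe_evalRingHom, RingHom.map_det]
  congr
  ext i j
  rcases eq_or_ne i j with rfl | hij <;> simp [*]

lemma charpolyRev_eq_one_of_isNilpotent [IsReduced R] {M : Matrix ι ι R} (hM : IsNilpotent M) :
    M.charpolyRev = 1 := by
  have hcoeff :=
    (isUnit_iff_coeff_isUnit_isNilpotent.mp (isUnit_charpolyRev_of_isNilpotent hM)).2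
  ext i
  rcases eq_or_ne i 0 with rfl | hi
  · simp [coeff_zero_eq_eval_zero]
  · simp [(hcoeff i hi).eq_zero, coeff_one, hi]

lemma det_eq_one_of_isNilpotent_one_sub [IsReduced R] {B : Matrix ι ι R}
    (hB : IsNilpotent (1 - B)) : B.det = 1 := by
  rw [← sub_sub_cancel 1 B, ← eval_one_charpolyRev, charpolyRev_eq_one_of_isNilpotent hB,
    eval_one]

lemma isNilpotent_one_sub_transvection {i j : ι} (hij : i ≠ j) (c : R) :
    IsNilpotent (1 - transvection i j c) :=
  ⟨2, by simp [transvection, sq, single_mul_single_of_ne _ _ _ _ hij.symm]⟩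

variable (ι R) in
def unipotentClosure : Submonoid (Matrix ι ι R) :=
  Submonoid.closure {B | IsNilpotent (1 - B)}

lemma mem_unipotentClosure_iff {A : Matrix ι ι R} :
    A ∈ unipotentClosure ι R ↔
      ∃ l : List (Matrix ι ι R), (∀ B ∈ l, IsNilpotent (1 - B)) ∧ l.prod = A :=
  ⟨Submonoid.exists_list_of_mem_closure, fun ⟨_, hl, hA⟩ ↦
    hA ▸ Submonoid.list_prod_mem _ fun B hB ↦ Submonoid.subset_closure (hl B hB)⟩

lemma unipotentClosure_le_mker_det [IsReduced R] :
    unipotentClosure ι R ≤ MonoidHom.mker (detMonoidHom : Matrix ι ι R →* R) :=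
  Submonoid.closure_le.mpr fun _ ↦ det_eq_one_of_isNilpotent_one_sub

lemma transvection_mem_unipotentClosure {i j : ι} (hij : i ≠ j) (c : R) :
    transvection i j c ∈ unipotentClosure ι R :=
  Submonoid.subset_closure (isNilpotent_one_sub_transvection hij c)

namespace SpecialLinearGroup

variable {F : Type*} [Field F]

lemma diag2n_decompose {i j : ι} (hij : i ≠ j) {a : F} (ha : a ≠ 0) :
    diag2n hij a ha = transvection hij a * transvection hij.symm (-a⁻¹) * transvection hij a *
      transvection hij (-1) * transvection hij.symm 1 * transvection hij (-1) := by
  ext k l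
  simp only [diag2n_coe, coe_mul, transvection_coe, mul_add, add_mul, one_mul, mul_one,
    single_mul_single_same, single_mul_single_of_ne _ _ _ _ hij,
    single_mul_single_of_ne _ _ _ _ hij.symm, add_zero, Matrix.add_apply, single_apply,
    one_apply, diagonal_apply]
  split_ifs <;> grind

lemma coe_mem_unipotentClosure [Nontrivial ι] (M : SpecialLinearGroup ι F) :
    (M : Matrix ι ι F) ∈ unipotentClosure ι F := by
  let S := (unipotentClosure ι F).comap coeMonoidHom
  have htransvection {i j : ι} (hij : i ≠ j) (c : F) : transvection hij c ∈ S :=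
    transvection_mem_unipotentClosure hij c
  refine diagonal_transvection_induction' (· ∈ S) M (fun i j hij c hc ↦ ?_)
    (fun _ _ ↦ htransvection) fun _ _ ↦ mul_mem
  rw [diag2n_decompose hij hc]
  repeat' refine mul_mem ?_ (htransvection _ _)
  exact htransvection _ _

end SpecialLinearGroup

lemma mem_unipotentClosure_iff_det_eq_one {F : Type*} [Field F] [Nontrivial ι]
    {A : Matrix ι ι F} : A ∈ unipotentClosure ι F ↔ A.det = 1 :=
  ⟨fun hA ↦ unipotentClosure_le_mker_det hA,
    fun hA ↦ SpecialLinearGroup.coe_mem_unipotentClosure ⟨A, hA⟩⟩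

end Matrix

theorem prod_unipotent_iff_det_one_general (F : Type*) [Field F] (n : ℕ) (hn : 2 ≤ n)
    (A : Matrix (Fin n) (Fin n) F) :
    (∃ l : List (Matrix (Fin n) (Fin n) F),
        (∀ B ∈ l, IsNilpotent (1 - B)) ∧ l.prod = A) ↔ A.det = 1 := by
  have : Nontrivial (Fin n) := Fin.nontrivial_iff_two_le.mpr hn
  rw [← Matrix.mem_unipotentClosure_iff, Matrix.mem_unipotentClosure_iff_det_eq_one]

theorem prod_unipotent_iff_det_one (F : Type*) [Field F]
    (h3 : ∃ a b c : F, a ≠ b ∧ b ≠ c ∧ a ≠ c) (n : ℕ) (hn : 2 ≤ n)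
    (A : Matrix (Fin n) (Fin n) F) (hA : IsUnit A) :
    (∃ l : List (Matrix (Fin n) (Fin n) F),
        (∀ B ∈ l, IsNilpotent (1 - B)) ∧ l.prod = A) ↔ A.det = 1 :=
  prod_unipotent_iff_det_one_general F n hn A
end

section
/- Let F be a field with at least three elements and n ≥ 2. Every matrix A ∈ SLₙ(F) that is unipotent of index 2 (i.e., (Iₙ - A)² = 0) is a commutator in GLₙ(F). -/
/-!
Write `A = 1 + N` with `N² = 0`. Let `X` act as a scalar `c ∉ {0, 1}` on `ker N` and as the
identity on a complement of it; since `im N ⊆ ker N`, this gives `X N X⁻¹ = c N`. With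
`Y = 1 + d N`, `d = (c - 1)⁻¹`, one gets `X Y X⁻¹ Y⁻¹ = (1 + d c N)(1 - d N) = 1 + d (c - 1) N = A`.
-/

theorem exists_ne_and_ne_of_three_distinct {α : Type*}
    (h3 : ∃ a b c : α, a ≠ b ∧ b ≠ c ∧ a ≠ c) (x y : α) : ∃ z, z ≠ x ∧ z ≠ y := by
  obtain ⟨a, b, c, hab, hbc, hac⟩ := h3
  by_contra! h
  have key (z : α) : z = x ∨ z = y := (em (z = x)).imp_right (h z)
  grind [key a, key b, key c]

section

variable {F R : Type*} [Field F] [Ring R] [Algebra F R]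

theorem IsIdempotentElem.one_add_smul_mul_one_add_smul {e : R} (he : IsIdempotentElem e)
    (a b : F) : (1 + a • e) * (1 + b • e) = 1 + (a + b + a * b) • e := by
  simp only [add_mul, mul_add, one_mul, mul_one, smul_mul_smul_comm, he.eq, add_smul]
  abel

theorem one_add_smul_mul_one_add_smul_of_mul_self_eq_zero {N : R} (hN : N * N = 0) (a b : F) :
    (1 + a • N) * (1 + b • N) = 1 + (a + b) • N := by
  simp only [add_mul, mul_add, one_mul, mul_one, smul_mul_smul_comm, hN, smul_zero, add_zero,
    add_smul]
  abel

/-- The witness `1 + (c - 1) • e` acts as `c` on the image of `e` and as `1` on its kernel. -/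
theorem IsIdempotentElem.exists_unit_conj_eq_smul {e N : R} (he : IsIdempotentElem e)
    (heN : e * N = N) (hNe : N * e = 0) {c : F} (hc : c ≠ 0) :
    ∃ X : Rˣ, X * N * X⁻¹ = c • N := by
  have hinv : ∀ a b : F, a * b = 1 → (1 + (a - 1) • e) * (1 + (b - 1) • e) = 1 := by
    intro a b hab
    rw [he.one_add_smul_mul_one_add_smul,
      show a - 1 + (b - 1) + (a - 1) * (b - 1) = a * b - 1 by ring, hab, sub_self, zero_smul,
      add_zero]
  refine ⟨⟨1 + (c - 1) • e, 1 + (c⁻¹ - 1) • e, hinv _ _ (mul_inv_cancel₀ hc),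
    hinv _ _ (inv_mul_cancel₀ hc)⟩, ?_⟩
  simp only [Units.val_mk, Units.inv_mk, add_mul, mul_add, one_mul, mul_one, smul_mul_assoc,
    mul_smul_comm, heN, hNe, smul_zero, add_zero]
  module

theorem exists_one_add_eq_commutator {N : R} (hN : N * N = 0) (X : Rˣ) {c : F}
    (hX : X * N * X⁻¹ = c • N) (hc : c ≠ 1) :
    ∃ Y : Rˣ, 1 + N = ↑(X * Y * X⁻¹ * Y⁻¹) := by
  have hmul := one_add_smul_mul_one_add_smul_of_mul_self_eq_zero hN (F := F)
  let d := (c - 1)⁻¹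
  refine ⟨⟨1 + d • N, 1 + (-d) • N, by rw [hmul, add_neg_cancel, zero_smul, add_zero],
    by rw [hmul, neg_add_cancel, zero_smul, add_zero]⟩, ?_⟩
  have hconj : (X : R) * (1 + d • N) * ↑X⁻¹ = 1 + (d * c) • N := by
    rw [mul_add, add_mul, mul_one, Units.mul_inv, mul_smul_comm, smul_mul_assoc, hX, smul_smul]
  rw [Units.val_mul, Units.val_mul, Units.val_mul, hconj, Units.inv_mk, Units.val_mk, hmul,
    ← sub_eq_add_neg, ← mul_sub_one, inv_mul_cancel₀ (sub_ne_zero.mpr hc), one_smul]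

end

theorem Module.End.exists_isIdempotentElem_mul_eq_and_mul_eq_zero {K V : Type*} [DivisionRing K]
    [AddCommGroup V] [Module K V] {φ : Module.End K V} (hφ : φ * φ = 0) :
    ∃ e : Module.End K V, IsIdempotentElem e ∧ e * φ = φ ∧ φ * e = 0 := by
  obtain ⟨U, hU⟩ := Submodule.exists_isCompl (LinearMap.ker φ)
  refine ⟨_, Submodule.isIdempotentElem_projection hU, LinearMap.ext fun x ↦ ?_,
    LinearMap.ext fun x ↦ ?_⟩
  · exact Submodule.projection_apply_of_mem_left hU
      (LinearMap.mem_ker.mpr (LinearMap.congr_fun hφ x))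
  · exact Submodule.projection_apply_mem hU x

theorem Matrix.exists_isIdempotentElem_mul_eq_and_mul_eq_zero {K n : Type*} [Field K]
    [Fintype n] [DecidableEq n] {N : Matrix n n K} (hN : N * N = 0) :
    ∃ e : Matrix n n K, IsIdempotentElem e ∧ e * N = N ∧ N * e = 0 := by
  obtain ⟨e, he, heN, hNe⟩ := Module.End.exists_isIdempotentElem_mul_eq_and_mul_eq_zero
    (φ := Matrix.toLinAlgEquiv' N) (by rw [← map_mul, hN, map_zero])
  refine ⟨Matrix.toLinAlgEquiv'.symm e, he.map _, ?_, ?_⟩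
  · rw [← Matrix.toLinAlgEquiv'.symm_apply_apply N, ← map_mul, heN]
  · rw [← Matrix.toLinAlgEquiv'.symm_apply_apply N, ← map_mul, hNe, map_zero]

theorem unipotent_index_two_commutator_general (F : Type*) [Field F]
    (h3 : ∃ a b c : F, a ≠ b ∧ b ≠ c ∧ a ≠ c) (n : ℕ)
    (A : Matrix (Fin n) (Fin n) F) (hA : (1 - A) ^ 2 = 0) :
    ∃ X Y : GL (Fin n) F, A = ((X * Y * X⁻¹ * Y⁻¹ : GL (Fin n) F) : Matrix (Fin n) (Fin n) F) := by
  obtain ⟨c, hc0, hc1⟩ := exists_ne_and_ne_of_three_distinct h3 0 1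
  have hN : (A - 1) * (A - 1) = 0 := by rw [← neg_sub 1 A, neg_mul_neg, ← sq, hA]
  obtain ⟨e, he, heN, hNe⟩ := Matrix.exists_isIdempotentElem_mul_eq_and_mul_eq_zero hN
  obtain ⟨X, hX⟩ := he.exists_unit_conj_eq_smul heN hNe hc0
  obtain ⟨Y, hY⟩ := exists_one_add_eq_commutator hN X hX hc1
  exact ⟨X, Y, by rw [← hY, add_sub_cancel]⟩

theorem unipotent_index_two_commutator (F : Type*) [Field F]
    (h3 : ∃ a b c : F, a ≠ b ∧ b ≠ c ∧ a ≠ c) (n : ℕ) (hn : 2 ≤ n)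
    (A : Matrix (Fin n) (Fin n) F) (hdet : A.det = 1) (hA : (1 - A) ^ 2 = 0) :
    ∃ X Y : GL (Fin n) F, A = ((X * Y * X⁻¹ * Y⁻¹ : GL (Fin n) F) : Matrix (Fin n) (Fin n) F) :=
  unipotent_index_two_commutator_general F h3 n A hA
end

section
/- Let R be a left Artinian F-algebra over a field F with at least three elements, and let α ∈ R be a product of unipotent elements of R. Then the image of α in R/J(R) lies in the derived subgroup of the unit group of R/J(R). -/
/-!
Since `π` kills `J(R)`, its image `S = R/J(R)` is semisimple, hence von Neumann regular. A scalar
`a ∉ {0, 1}` of `F` maps to a central unit `g` of `S` with `g - 1` a unit as well.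

If `p` is idempotent with `p m = m` and `m p = 0`, then conjugation by `1 + (g - 1) p` scales `m`
by `g`, so the commutator of `1 + (g - 1) p` and `1 + m` is `1 + (g - 1) m`. In a regular ring a
square-zero `c` with `c s c = c` has this shape, for `p = c s` and `m = (g - 1)⁻¹ c`.
A general nilpotent `n` with `n ^ (k + 1) = 0` splits as `1 + n = (1 + e n) (1 + (n - e n))`,
where `e` satisfies `n e = n` and `e n ^ k = 0`: then `n - e n` is square-zero and
`(e n) ^ k = e n ^ k = 0`, so induction on `k` applies.
-/

open scoped commutatorElement

theorem exists_ne_zero_ne_one_of_three {α : Type*} [Zero α] [One α]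
    (h : ∃ a b c : α, a ≠ b ∧ b ≠ c ∧ a ≠ c) : ∃ a : α, a ≠ 0 ∧ a ≠ 1 := by
  obtain ⟨a, b, c, hab, hbc, hac⟩ := h
  by_contra! h01
  have h01 (x : α) : x = 0 ∨ x = 1 := or_iff_not_imp_left.mpr (h01 x)
  rcases h01 a with rfl | rfl <;> rcases h01 b with rfl | rfl <;> rcases h01 c with rfl | rfl <;>
    simp_all

theorem IsSemiprimaryRing.isSemisimpleRing_of_surjective {R S : Type*} [Ring R]
    [IsSemiprimaryRing R] [Ring S] (π : R →+* S) (hsurj : Function.Surjective π)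
    (hJ : ∀ r ∈ Ring.jacobson R, π r = 0) : IsSemisimpleRing S :=
  (Ideal.Quotient.lift _ π hJ).isSemisimpleRing_of_surjective
    (Ideal.Quotient.lift_surjective_of_surjective _ hJ hsurj)

def IsVonNeumannRegularRing (S : Type*) [Ring S] : Prop :=
  ∀ a : S, ∃ s : S, a * s * a = a

theorem IsSemisimpleRing.isVonNeumannRegularRing (S : Type*) [Ring S] [IsSemisimpleRing S] :
    IsVonNeumannRegularRing S := by
  intro a
  obtain ⟨e, he, hspan⟩ := IsSemisimpleRing.ideal_eq_span_idempotent (Ideal.span {a})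
  obtain ⟨s, hs⟩ := Ideal.mem_span_singleton'.mp (hspan ▸ Ideal.mem_span_singleton_self e)
  obtain ⟨r, hr⟩ := Ideal.mem_span_singleton'.mp (hspan ▸ Ideal.mem_span_singleton_self a)
  refine ⟨s, ?_⟩
  rw [mul_assoc, hs, ← hr, mul_assoc, he.eq]

theorem IsVonNeumannRegularRing.exists_mul_eq_self_and_mul_eq_zero {S : Type*} [Ring S]
    (hS : IsVonNeumannRegularRing S) {x y : S} (hxy : x * y = 0) :
    ∃ e : S, x * e = x ∧ e * y = 0 := by
  obtain ⟨s, hs⟩ := hS y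
  refine ⟨1 - y * s, ?_, ?_⟩
  · rw [mul_sub, mul_one, ← mul_assoc, hxy, zero_mul, sub_zero]
  · rw [sub_mul, one_mul, hs, sub_self]

section CentralUnit

variable {S : Type*} [Ring S] (g : Sˣ) (hgc : ∀ x : S, Commute (g : S) x)

include hgc in
theorem one_add_sub_one_mul_mem_commutator {p m : S} (hp : IsIdempotentElem p)
    (hpm : p * m = m) (hmp : m * p = 0) :
    ∃ u ∈ commutator Sˣ, (u : S) = 1 + (g - 1) * m := by
  have hm : m * m = 0 := by nth_rewrite 2 [← hpm]; rw [← mul_assoc, hmp, zero_mul]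
  have hpg : p * g = g * p := (hgc p).eq.symm
  have hpg' : p * ↑g⁻¹ = ↑g⁻¹ * p := (hgc p).units_inv_left.eq.symm
  let d : Sˣ :=
    { val := 1 + (g - 1) * p
      inv := 1 + (↑g⁻¹ - 1) * p
      val_inv := by
        linear_combination (norm := noncomm_ring)
          (g - 1 : S) * hpg' * p + ((g : S) - 1) * (↑g⁻¹ - 1) * hp.eq + g.mul_inv * p
      inv_val := by
        linear_combination (norm := noncomm_ring)
          (↑g⁻¹ - 1 : S) * hpg * p + (↑g⁻¹ - 1 : S) * ((g : S) - 1) * hp.eq + g.inv_mul * p }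
  let v : Sˣ :=
    { val := 1 + m
      inv := 1 - m
      val_inv := by linear_combination (norm := noncomm_ring) -hm
      inv_val := by linear_combination (norm := noncomm_ring) -hm }
  have hdm : (d : S) * m = g * m := by
    show (1 + (g - 1) * p) * m = g * m
    linear_combination (norm := noncomm_ring) (g - 1 : S) * hpm
  have hmd : m * ↑d⁻¹ = m := by
    show m * (1 + (↑g⁻¹ - 1) * p) = m
    linear_combination (norm := noncomm_ring) hmp * (↑g⁻¹ - 1 : S) - m * hpg'
  refine ⟨⁅d, v⁆, Subgroup.commutator_mem_commutator (Subgroup.mem_top d) (Subgroup.mem_top v), ?_⟩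
  calc (⁅d, v⁆ : Sˣ).val = (d * ↑d⁻¹ + d * m * ↑d⁻¹) * (1 - m) := by
        show d * (1 + m) * ↑d⁻¹ * (1 - m) = _
        noncomm_ring
    _ = (1 + g * m) * (1 - m) := by rw [d.mul_inv, mul_assoc, hmd, hdm]
    _ = 1 + (g - 1) * m := by linear_combination (norm := noncomm_ring) -(g : S) * hm

variable (hg1 : IsUnit ((g : S) - 1))

include hgc hg1 in
theorem one_add_mem_commutator_of_mul_self_eq_zero {c s : S} (hc : c * c = 0)
    (hcs : c * s * c = c) : ∃ u ∈ commutator Sˣ, (u : S) = 1 + c := by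
  obtain ⟨t, ht⟩ := hg1
  have htc (x : S) : Commute (↑t⁻¹ : S) x :=
    (show Commute (t : S) x by rw [ht]; exact (hgc x).sub_left (Commute.one_left x)).units_inv_left
  obtain ⟨u, hu, hval⟩ := one_add_sub_one_mul_mem_commutator g hgc (p := c * s) (m := ↑t⁻¹ * c)
    (by rw [IsIdempotentElem, ← mul_assoc, hcs])
    (by rw [← mul_assoc, ← (htc _).eq, mul_assoc, hcs])
    (by rw [mul_assoc, ← mul_assoc c, hc, zero_mul, mul_zero])
  exact ⟨u, hu, by rw [hval, ← ht, ← mul_assoc, Units.mul_inv, one_mul]⟩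

include hgc hg1 in
theorem one_add_mem_commutator_of_pow_succ_eq_zero (hS : IsVonNeumannRegularRing S) (k : ℕ) :
    ∀ {n : S}, n ^ (k + 1) = 0 → ∃ u ∈ commutator Sˣ, (u : S) = 1 + n := by
  induction k with
  | zero =>
    intro n hn
    exact ⟨1, one_mem _, by rw [pow_one] at hn; rw [hn, add_zero, Units.val_one]⟩
  | succ k ih =>
    intro n hn
    obtain ⟨e, hne, hen⟩ :=
      hS.exists_mul_eq_self_and_mul_eq_zero (x := n) (y := n ^ (k + 1)) (by rw [← pow_succ', hn])
    have hsemi : SemiconjBy e n (e * n) := by rw [SemiconjBy, mul_assoc, hne]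
    have hen' : (e * n) ^ (k + 1) = 0 := by
      rw [pow_succ, ← mul_assoc, ← (hsemi.pow_right k).eq, mul_assoc, ← pow_succ, hen]
    have hb : (n - e * n) * (n - e * n) = 0 := by
      linear_combination (norm := noncomm_ring) -(1 - e) * hne * n
    obtain ⟨s, hs⟩ := hS (n - e * n)
    obtain ⟨u, hu, hu'⟩ := ih hen'
    obtain ⟨v, hv, hv'⟩ := one_add_mem_commutator_of_mul_self_eq_zero g hgc hg1 hb hs
    refine ⟨u * v, mul_mem hu hv, ?_⟩
    rw [Units.val_mul, hu', hv']
    linear_combination (norm := noncomm_ring) -e * hne * n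

include hgc hg1 in
theorem mem_commutator_of_isNilpotent_one_sub (hS : IsVonNeumannRegularRing S) {w : S}
    (hw : IsNilpotent (1 - w)) : ∃ u ∈ commutator Sˣ, (u : S) = w := by
  obtain ⟨k, hk⟩ := hw.neg
  obtain ⟨u, hu, hval⟩ := one_add_mem_commutator_of_pow_succ_eq_zero g hgc hg1 hS k
    (n := w - 1) (by rw [pow_succ, ← neg_sub, hk, zero_mul])
  exact ⟨u, hu, by rw [hval, add_sub_cancel]⟩

end CentralUnit

theorem image_in_derived_subgroup (F : Type*) [Field F]
    (h3 : ∃ a b c : F, a ≠ b ∧ b ≠ c ∧ a ≠ c)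
    (R : Type*) [Ring R] [Algebra F R] [IsArtinianRing R]
    (α : R) (l : List R) (hl : ∀ z ∈ l, IsNilpotent (1 - z)) (hprod : l.prod = α)
    -- S plays the role of the quotient R / J(R):
    (S : Type*) [Ring S] (π : R →+* S) (hsurj : Function.Surjective π)
    (hker : ∀ r : R, π r = 0 ↔ r ∈ Ideal.jacobson (⊥ : Ideal R)) :
    ∃ u : Sˣ, (u : S) = π α ∧ u ∈ commutator Sˣ := by
  obtain ⟨a, ha0, ha1⟩ := exists_ne_zero_ne_one_of_three h3
  have : IsSemisimpleRing S := IsSemiprimaryRing.isSemisimpleRing_of_surjective π hsurj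
    fun r hr => (hker r).mpr (by rwa [Ideal.jacobson_bot])
  let φ := π.comp (algebraMap F R)
  have hφ (b : F) (x : S) : Commute (φ b) x := by
    obtain ⟨r, rfl⟩ := hsurj x
    exact (Algebra.commute_algebraMap_left b r).map π
  let g : Sˣ := (Units.mk0 a ha0).map φ
  have hg1 : IsUnit ((g : S) - 1) := by
    simpa [g, φ] using (Ne.isUnit (sub_ne_zero.mpr ha1)).map φ
  have hprod_mem : (l.map π).prod ∈ (commutator Sˣ).toSubmonoid.map (Units.coeHom S) := by
    refine Submonoid.list_prod_mem _ fun w hw => ?_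
    obtain ⟨z, hz, rfl⟩ := List.mem_map.mp hw
    refine Submonoid.mem_map.mpr (mem_commutator_of_isNilpotent_one_sub g (hφ a) hg1
      (IsSemisimpleRing.isVonNeumannRegularRing S) ?_)
    simpa using (hl z hz).map π
  obtain ⟨u, hu, hval⟩ := Submonoid.mem_map.mp hprod_mem
  exact ⟨u, by rw [← hprod, map_list_prod]; exact hval, hu⟩
end

section
/- Let R be a ring whose Jacobson radical J(R) is nilpotent, and let U and V be subgroups of R* consisting entirely of unipotent elements, with U ⊆ 1 + J(R). Then every element of the set U·V = {uv : u ∈ U, v ∈ V} is unipotent. -/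
/-! Write `J` for the Jacobson radical. Since `1 - uv = (1 - v) + (1 - u)v` with `(1 - u)v ∈ J`,
the image of `1 - uv` in `R ⧸ J` equals that of the nilpotent element `1 - v`; hence some power
of `1 - uv` lies in `J`, and a further power vanishes because `J` is nilpotent. -/

theorem pow_eq_zero_of_forall_list_prod_eq_zero {M : Type*} [Monoid M] [Zero M] {S : Set M}
    {n : ℕ} (hS : ∀ l : List M, (∀ z ∈ l, z ∈ S) → l.length = n → l.prod = 0)
    {x : M} (hx : x ∈ S) : x ^ n = 0 := by
  simpa [List.prod_replicate] using
    hS (List.replicate n x) (fun z hz => List.eq_of_mem_replicate hz ▸ hx) List.length_replicate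

theorem Ideal.exists_pow_mem_of_sub_mem_of_isNilpotent {R : Type*} [Ring R] {I : Ideal R}
    [I.IsTwoSided] {x y : R} (hx : IsNilpotent x) (hxy : y - x ∈ I) : ∃ k : ℕ, y ^ k ∈ I := by
  have hmk : Ideal.Quotient.mk I y = Ideal.Quotient.mk I x := Ideal.Quotient.eq.mpr hxy
  obtain ⟨k, hk⟩ := hx.map (Ideal.Quotient.mk I)
  exact ⟨k, (Ideal.Quotient.eq_zero_iff_mem).mp (by rw [map_pow, hmk, hk])⟩

theorem mul_unipotent_of_jacobson_nilpotent_general (R : Type*) [Ring R]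
    (hJ : ∃ n : ℕ, ∀ l : List R,
      (∀ z ∈ l, z ∈ Ideal.jacobson (⊥ : Ideal R)) → l.length = n → l.prod = 0)
    (U V : Subgroup Rˣ)
    (hU : ∀ u ∈ U, ((u : R) - 1) ∈ Ideal.jacobson (⊥ : Ideal R))
    (hVuni : ∀ v ∈ V, IsNilpotent ((1 : R) - (v : R))) :
    ∀ u ∈ U, ∀ v ∈ V, IsNilpotent ((1 : R) - ((u * v : Rˣ) : R)) := by
  intro u hu v hv
  obtain ⟨n, hn⟩ := hJ
  have hdiff : (1 - ((u * v : Rˣ) : R)) - (1 - (v : R)) ∈ Ideal.jacobson (⊥ : Ideal R) := by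
    have hmul := Ideal.mul_mem_right (v : R) _ (neg_mem (hU u hu))
    convert hmul using 1
    push_cast
    noncomm_ring
  obtain ⟨k, hk⟩ := Ideal.exists_pow_mem_of_sub_mem_of_isNilpotent (hVuni v hv) hdiff
  exact ⟨k * n, by rw [pow_mul]; exact pow_eq_zero_of_forall_list_prod_eq_zero hn hk⟩

theorem mul_unipotent_of_jacobson_nilpotent (R : Type*) [Ring R]
    (hJ : ∃ n : ℕ, ∀ l : List R,
      (∀ z ∈ l, z ∈ Ideal.jacobson (⊥ : Ideal R)) → l.length = n → l.prod = 0)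
    (U V : Subgroup Rˣ)
    (hU : ∀ u ∈ U, ((u : R) - 1) ∈ Ideal.jacobson (⊥ : Ideal R))
    (hUuni : ∀ u ∈ U, IsNilpotent ((1 : R) - (u : R)))
    (hVuni : ∀ v ∈ V, IsNilpotent ((1 : R) - (v : R))) :
    ∀ u ∈ U, ∀ v ∈ V, IsNilpotent ((1 : R) - ((u * v : Rˣ) : R)) :=
  mul_unipotent_of_jacobson_nilpotent_general R hJ U V hU hVuni
end
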